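/- Let A be a local ring. Then Ω^i_{A} (the i-th exterior power of the Kähler differentials of A over its prime ring) is generated as an A-module by elements of the form a · (db₁/b₁) ∧ … ∧ (db_i/b_i) with a ∈ A and b₁, …, b_i units of A. Equivalently, the A-linear map A ⊗_Z (A^×)^{⊗ i} → Ω^i_A sending a ⊗ b₁ ⊗ … ⊗ b_i to a (db₁/b₁) ∧ … ∧ (db_i/b_i) is surjective. -/

import Mathlib

open ExteriorAlgebra

private lemma multilinear_apply_mem_span
    {R M N : Type*} [CommSemiring R] [AddCommMonoid M] [AddCommMonoid N]
    [Module R M] [Module R N] {n : ℕ}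
    (f : MultilinearMap R (fun _ : Fin n => M) N) (S : Set M)
    (v : Fin n → M) (hv : ∀ j, v j ∈ Submodule.span R S) :
    f v ∈ Submodule.span R {y | ∃ w : Fin n → M, (∀ j, w j ∈ S) ∧ y = f w} := by
  classical
  suffices H : ∀ (t : Finset (Fin n)) (v : Fin n → M), (∀ j, v j ∈ Submodule.span R S) →
      (∀ j ∉ t, v j ∈ S) →
      f v ∈ Submodule.span R {y | ∃ w : Fin n → M, (∀ j, w j ∈ S) ∧ y = f w} by
    exact H Finset.univ v hv (fun j hj => absurd (Finset.mem_univ j) hj)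
  intro t
  induction t using Finset.induction_on with
  | empty =>
    intro v hv h
    exact Submodule.subset_span ⟨v, fun j => h j (by simp), rfl⟩
  | @insert j t hjt ih =>
    intro v hv h
    have key : ∀ x ∈ Submodule.span R S,
        f (Function.update v j x) ∈
          Submodule.span R {y | ∃ w : Fin n → M, (∀ j, w j ∈ S) ∧ y = f w} := by
      intro x hx
      induction hx using Submodule.span_induction with
      | mem x hx =>
        refine ih (Function.update v j x) (fun k => ?_) (fun k hk => ?_)
        · rcases eq_or_ne k j with rfl | hne
          · simpa using Submodule.subset_span hx
          · simpa [Function.update_of_ne hne] using hv k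
        · rcases eq_or_ne k j with rfl | hne
          · simpa using hx
          · have : k ∉ insert j t := by simp [hne, hk]
            simpa [Function.update_of_ne hne] using h k this
      | zero => simp
      | add x y hx hy ihx ihy =>
        rw [f.map_update_add]
        exact Submodule.add_mem _ ihx ihy
      | smul c x hx ihx =>
        rw [f.map_update_smul]
        exact Submodule.smul_mem _ c ihx
    have := key (v j) (hv j)
    rwa [Function.update_eq_self] at this

/-- Let `A` be a (commutative) local ring.  Then `Ω^i_A`, the `i`-th
exterior power of the Kähler differentials of `A` (over its prime ring `ℤ`), is generated as
an `A`-module by the elements `a • (db₁/b₁) ∧ … ∧ (db_i/b_i)` with `a ∈ A` and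
`b₁, …, b_i` units of `A`; equivalently, the `A`-linear map
`A ⊗_ℤ (A^×)^{⊗ i} → Ω^i_A`, `a ⊗ b₁ ⊗ … ⊗ b_i ↦ a (db₁/b₁) ∧ … ∧ (db_i/b_i)`,
is surjective. -/
theorem exteriorPower_kaehler_spanned_by_dlog_forms
    (A : Type*) [CommRing A] [IsLocalRing A] (i : ℕ) :
    Submodule.span A
      {x : ExteriorAlgebra A (Ω[A⁄ℤ]) |
        ∃ (a : A) (b : Fin i → Aˣ),
          x = a • ExteriorAlgebra.ιMulti A i
            (fun j => (((b j)⁻¹ : Aˣ) : A) • KaehlerDifferential.D ℤ A ((b j : A)))} =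
    ⋀[A]^i (Ω[A⁄ℤ]) := by
  classical
  set S : Set (Ω[A⁄ℤ]) :=
    {x | ∃ b : Aˣ, x = ((b⁻¹ : Aˣ) : A) • KaehlerDifferential.D ℤ A (b : A)} with hS
  -- dlog forms span Ω
  have hspan : Submodule.span A S = ⊤ := by
    rw [eq_top_iff, ← KaehlerDifferential.span_range_derivation ℤ A]
    rw [Submodule.span_le]
    rintro _ ⟨a, rfl⟩
    rcases IsLocalRing.isUnit_or_isUnit_one_sub_self a with hu | hu
    · obtain ⟨u, rfl⟩ := hu
      have : KaehlerDifferential.D ℤ A (u : A) =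
          (u : A) • (((u⁻¹ : Aˣ) : A) • KaehlerDifferential.D ℤ A (u : A)) := by
        rw [smul_smul]
        simp
      rw [this]
      exact Submodule.smul_mem _ _ (Submodule.subset_span ⟨u, rfl⟩)
    · obtain ⟨u, hu⟩ := hu
      have hDa : KaehlerDifferential.D ℤ A a =
          (-(u : A)) • (((u⁻¹ : Aˣ) : A) • KaehlerDifferential.D ℤ A (u : A)) := by
        rw [smul_smul]
        have : ((-(u : A)) * ((u⁻¹ : Aˣ) : A)) = -1 := by
          rw [neg_mul]
          simp
        rw [this, hu]
        simp
      rw [hDa]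
      exact Submodule.smul_mem _ _ (Submodule.subset_span ⟨u, rfl⟩)
  rw [← ExteriorAlgebra.ιMulti_span_fixedDegree]
  apply le_antisymm
  · rw [Submodule.span_le]
    rintro _ ⟨a, b, rfl⟩
    apply Submodule.smul_mem
    exact Submodule.subset_span ⟨_, rfl⟩
  · rw [Submodule.span_le]
    rintro _ ⟨v, rfl⟩
    have key := multilinear_apply_mem_span
      (ExteriorAlgebra.ιMulti A i (M := Ω[A⁄ℤ])).toMultilinearMap S v
      (fun j => by rw [hspan]; trivial)
    refine Submodule.span_le.2 ?_ key
    rintro _ ⟨w, hw, rfl⟩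
    choose b hb using hw
    refine Submodule.subset_span ⟨1, b, ?_⟩
    rw [one_smul]
    exact congrArg _ (funext hb)
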